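/- arXiv:2208.00244 — 7 statements merged into one kernel-verified Lean document; each statement's English description precedes it below -/
import Mathlib

section
/- A map p : ℤ² → ℂ∪{∞} satisfies the P-net condition 1/(p_{i+1,j}-p_{i,j}) - 1/(p_{i,j+1}-p_{i,j}) + 1/(p_{i-1,j}-p_{i,j}) - 1/(p_{i,j-1}-p_{i,j}) = 0 at (i,j) if and only if it satisfies the multi-ratio condition ((p_{i,j}-p_{i+1,j})(p_{i,j+1}-p_{i,j})(p_{i-1,j}-p_{i,j-1})) / ((p_{i+1,j}-p_{i,j+1})(p_{i,j}-p_{i-1,j})(p_{i,j-1}-p_{i,j})) = -1, assuming all the pairwise differences appearing as denominators are nonzero. -/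
/-- A map `p : ℤ² → ℂ` satisfies the P-net condition at `(i,j)` iff it satisfies
the multi-ratio condition there, assuming all differences appearing as
denominators are nonzero. -/
theorem pnet_iff_multiratio (p : ℤ × ℤ → ℂ) (i j : ℤ)
    (h1 : p (i + 1, j) - p (i, j) ≠ 0)
    (h2 : p (i, j + 1) - p (i, j) ≠ 0)
    (h3 : p (i - 1, j) - p (i, j) ≠ 0)
    (h4 : p (i, j - 1) - p (i, j) ≠ 0)
    (h5 : p (i + 1, j) - p (i, j + 1) ≠ 0) :
    (1 / (p (i + 1, j) - p (i, j)) - 1 / (p (i, j + 1) - p (i, j))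
        + 1 / (p (i - 1, j) - p (i, j)) - 1 / (p (i, j - 1) - p (i, j)) = 0)
      ↔
    ((p (i, j) - p (i + 1, j)) * (p (i, j + 1) - p (i, j)) * (p (i - 1, j) - p (i, j - 1)))
        / ((p (i + 1, j) - p (i, j + 1)) * (p (i, j) - p (i - 1, j)) * (p (i, j - 1) - p (i, j)))
      = -1 := by
  have h3' : p (i, j) - p (i - 1, j) ≠ 0 := fun h => h3 (by linear_combination -h)
  constructor
  · intro h
    field_simp at h ⊢
    linear_combination h
  · intro h
    field_simp at h ⊢
    linear_combination h
end

section
/- Let z, w : ℤ² → ℂ, and α, β : ℤ → ℂ∖{0} and γ ∈ ℂ∖{0}. Suppose cr(z_{i,j}, z_{i+1,j}, w_{i+1,j}, w_{i,j}) = α_i/γ, cr(w_{i,j}, w_{i,j+1}, w_{i+1,j+1}, w_{i+1,j}) = β_j/α_i, and cr(w_{i,j+1}, z_{i,j+1}, z_{i,j}, w_{i,j}) = γ/β_j, with all points in each cross-ratio pairwise distinct. Then ((z_{i,j}-z_{i+1,j})(w_{i+1,j}-w_{i+1,j+1})(w_{i,j+1}-z_{i,j+1})) / ((z_{i+1,j}-w_{i+1,j})(w_{i+1,j+1}-w_{i,j+1})(z_{i,j+1}-z_{i,j}))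 = -1. -/
/-- The cross-ratio of four complex numbers. -/
noncomputable def cr (a b c d : ℂ) : ℂ := ((a - b) * (c - d)) / ((b - c) * (d - a))

private lemma aux (A B C D E F G : ℂ) (r s t : ℂ)
    (hr : r ≠ 0) (hs : s ≠ 0) (ht : t ≠ 0)
    (hBC : B ≠ C) (hDA : D ≠ A) (hCD : C ≠ D) (hEF : E ≠ F) (hDE : D ≠ E) (hGA : G ≠ A)
    (h1 : cr A B C D = r / t) (h2 : cr D E F C = s / r) (h3 : cr E G A D = t / s) :
    ((A - B) * (C - F) * (E - G)) / ((B - C) * (F - E) * (G - A)) = -1 := by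
  have hBC' : B - C ≠ 0 := sub_ne_zero.mpr hBC
  have hDA' : D - A ≠ 0 := sub_ne_zero.mpr hDA
  have hCD' : C - D ≠ 0 := sub_ne_zero.mpr hCD
  have hEF' : E - F ≠ 0 := sub_ne_zero.mpr hEF
  have hDE' : D - E ≠ 0 := sub_ne_zero.mpr hDE
  have hGA' : G - A ≠ 0 := sub_ne_zero.mpr hGA
  unfold cr at h1 h2 h3
  rw [div_eq_div_iff (by exact mul_ne_zero hBC' hDA') ht] at h1
  rw [div_eq_div_iff (by exact mul_ne_zero hEF' hCD') hr] at h2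
  rw [div_eq_div_iff (by exact mul_ne_zero hGA' hDE') hs] at h3
  have e12 : ((A - B) * (C - D) * t) * ((D - E) * (F - C) * r)
      = (r * ((B - C) * (D - A))) * (s * ((E - F) * (C - D))) := by rw [h1, h2]
  have e123 : ((A - B) * (C - D) * t) * ((D - E) * (F - C) * r) * ((E - G) * (A - D) * s)
      = (r * ((B - C) * (D - A))) * (s * ((E - F) * (C - D))) * (t * ((G - A) * (D - E))) := by
    rw [e12, h3]
  rw [div_eq_iff (by exact mul_ne_zero (mul_ne_zero hBC' (sub_ne_zero.mpr (Ne.symm hEF))) hGA')]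
  have hkey : ((A - B) * (C - F) * (E - G)) * (r * s * t * (C - D) * (D - E) * (D - A))
      = (-1 * ((B - C) * (F - E) * (G - A))) * (r * s * t * (C - D) * (D - E) * (D - A)) := by
    linear_combination e123
  exact mul_right_cancel₀ (by
    exact mul_ne_zero (mul_ne_zero (mul_ne_zero (mul_ne_zero (mul_ne_zero hr hs) ht) hCD') hDE') hDA') hkey

/-- The dSKP relation for a Bäcklund pair of integrable cross-ratio maps:
if the three cross-ratios factor as `α_i/γ`, `β_j/α_i`, `γ/β_j`, then the
multi-ratio of the six points equals `-1`. -/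
theorem backlund_dskp (z w : ℤ × ℤ → ℂ) (α β : ℤ → ℂ) (γ : ℂ)
    (hα : ∀ i, α i ≠ 0) (hβ : ∀ j, β j ≠ 0) (hγ : γ ≠ 0) (i j : ℤ)
    (hd1 : List.Pairwise (· ≠ ·) [z (i, j), z (i + 1, j), w (i + 1, j), w (i, j)])
    (hd2 : List.Pairwise (· ≠ ·) [w (i, j), w (i, j + 1), w (i + 1, j + 1), w (i + 1, j)])
    (hd3 : List.Pairwise (· ≠ ·) [w (i, j + 1), z (i, j + 1), z (i, j), w (i, j)])
    (h1 : cr (z (i, j)) (z (i + 1, j)) (w (i + 1, j)) (w (i, j)) = α i / γ)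
    (h2 : cr (w (i, j)) (w (i, j + 1)) (w (i + 1, j + 1)) (w (i + 1, j)) = β j / α i)
    (h3 : cr (w (i, j + 1)) (z (i, j + 1)) (z (i, j)) (w (i, j)) = γ / β j) :
    ((z (i, j) - z (i + 1, j)) * (w (i + 1, j) - w (i + 1, j + 1)) * (w (i, j + 1) - z (i, j + 1)))
      / ((z (i + 1, j) - w (i + 1, j)) * (w (i + 1, j + 1) - w (i, j + 1)) * (z (i, j + 1) - z (i, j)))
      = -1 := by
  simp only [List.pairwise_cons, List.mem_cons, List.mem_singleton, List.not_mem_nil,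
    forall_eq_or_imp, forall_eq, ne_eq]  at hd1 hd2 hd3
  exact aux (z (i, j)) (z (i + 1, j)) (w (i + 1, j)) (w (i, j)) (w (i, j + 1))
    (w (i + 1, j + 1)) (z (i, j + 1)) (α i) (β j) γ (hα i) (hβ j) hγ
    hd1.2.1.1 (Ne.symm hd1.1.2.2.1) hd1.2.2.1.1 hd2.2.1.1 hd2.1.1 hd3.2.1.1 h1 h2 h3
end

section
/- Let m be a positive even integer and y₀,…,y_{m-1} ∈ ℂ∖{0} with ∑_{ℓ=0}^{m-1} (-1)^ℓ / y_ℓ = 0. Let N be the (m-1)×(m-1) matrix with entries N_{i,j} = 1/y_{[j-i] mod m} (indices taken modulo m). If N is invertible and λ := ∑_{ℓ even, 0≤ℓ≤m-2} 1/y_ℓ ≠ 0, then the sum of all entries of N⁻¹ equals (m/2)·λ⁻¹ = ( (1/m) ∑_{ℓ=0}^{m-1} 1/y_ℓ )⁻¹. -/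
open Finset

lemma aux_card_even (k : ℕ) : ((Finset.range (2*k)).filter (fun n => Even n)).card = k := by
  induction k with
  | zero => simp
  | succ k ih =>
    have : 2 * (k+1) = (2*k + 1) + 1 := by ring
    rw [this, Finset.range_add_one, Finset.filter_insert, Finset.range_add_one,
      Finset.filter_insert]
    simp only [Nat.even_add_one, Nat.even_iff, Nat.mul_mod_right] at ih ⊢
    simp [ih, Finset.mem_filter, Finset.mem_range]

lemma aux_cast_sum (m : ℕ) [NeZero m] (p : ℕ → Prop) [DecidablePred p] (f : ZMod m → ℂ) :
    ∑ ℓ ∈ (Finset.range m).filter (fun ℓ => p ℓ), f ((ℓ : ℕ) : ZMod m)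
      = ∑ z ∈ Finset.univ.filter (fun z : ZMod m => p z.val), f z := by
  refine Finset.sum_nbij' (fun ℓ => ((ℓ : ℕ) : ZMod m)) (fun z => z.val) ?_ ?_ ?_ ?_ ?_
  · intro a ha
    simp only [mem_filter, mem_range] at ha
    simp [mem_filter, ZMod.val_natCast_of_lt ha.1, ha.2]
  · intro z hz
    simp only [mem_filter, mem_univ, true_and] at hz
    simp [mem_filter, mem_range, ZMod.val_lt, hz]
  · intro a ha
    simp only [mem_filter, mem_range] at ha
    exact ZMod.val_natCast_of_lt ha.1
  · intro z _
    simp [ZMod.natCast_val]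
  · intro a _; rfl


/-- Premature singularity computation: for the `(m-1)×(m-1)` partial circulant
matrix `N_{i,j} = 1/y_{(j-i) mod m}` with `m` even and vanishing alternating
harmonic sum, the sum of all entries of `N⁻¹` equals `(m/2)·λ⁻¹`, which is the
harmonic mean `((1/m) ∑ 1/y_ℓ)⁻¹`. -/
theorem partial_circulant_inverse_entry_sum (m : ℕ) (hm : Even m) (hm0 : 0 < m)
    (y : ZMod m → ℂ) (hy : ∀ ℓ, y ℓ ≠ 0)
    (halt : ∑ ℓ ∈ Finset.range m, (-1 : ℂ) ^ ℓ * (y ((ℓ : ℕ) : ZMod m))⁻¹ = 0)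
    (N : Matrix (Fin (m - 1)) (Fin (m - 1)) ℂ)
    (hN : ∀ i j : Fin (m - 1), N i j = (y ((((j : ℤ) - (i : ℤ)) : ℤ) : ZMod m))⁻¹)
    (hinv : IsUnit N.det)
    (lam : ℂ)
    (hlam : lam = ∑ ℓ ∈ (Finset.range m).filter (fun ℓ => Even ℓ), (y ((ℓ : ℕ) : ZMod m))⁻¹)
    (hlam0 : lam ≠ 0) :
    ∑ i, ∑ j, N⁻¹ i j = ((m : ℂ) / 2) * lam⁻¹ ∧
    ∑ i, ∑ j, N⁻¹ i j = ((1 / (m : ℂ)) * ∑ ℓ ∈ Finset.range m, (y ((ℓ : ℕ) : ZMod m))⁻¹)⁻¹ := by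
  haveI : NeZero m := ⟨hm0.ne'⟩
  have h2 : (2:ℕ) ∣ m := hm.two_dvd
  set Se := Finset.univ.filter (fun z : ZMod m => Even z.val) with hSe
  set So := Finset.univ.filter (fun z : ZMod m => ¬ Even z.val) with hSo
  -- lam is the even sum over ZMod m
  have hlamE : lam = ∑ z ∈ Se, (y z)⁻¹ := by
    rw [hlam, aux_cast_sum m (fun ℓ => Even ℓ) (fun z => (y z)⁻¹)]
  -- odd sum equals lam
  have hlamO : ∑ z ∈ So, (y z)⁻¹ = lam := by
    have hsplit : ∑ ℓ ∈ Finset.range m, (-1 : ℂ) ^ ℓ * (y ((ℓ : ℕ) : ZMod m))⁻¹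
        = ∑ ℓ ∈ (Finset.range m).filter (fun ℓ => Even ℓ), (-1:ℂ)^ℓ * (y ((ℓ : ℕ) : ZMod m))⁻¹
          + ∑ ℓ ∈ (Finset.range m).filter (fun ℓ => ¬ Even ℓ), (-1:ℂ)^ℓ * (y ((ℓ : ℕ) : ZMod m))⁻¹ :=
      (Finset.sum_filter_add_sum_filter_not _ _ _).symm
    have he : ∑ ℓ ∈ (Finset.range m).filter (fun ℓ => Even ℓ), (-1:ℂ)^ℓ * (y ((ℓ : ℕ) : ZMod m))⁻¹
        = lam := by
      rw [hlam]
      refine Finset.sum_congr rfl fun ℓ hℓ => ?_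
      simp only [mem_filter] at hℓ
      rw [hℓ.2.neg_one_pow, one_mul]
    have ho : ∑ ℓ ∈ (Finset.range m).filter (fun ℓ => ¬ Even ℓ), (-1:ℂ)^ℓ * (y ((ℓ : ℕ) : ZMod m))⁻¹
        = - ∑ ℓ ∈ (Finset.range m).filter (fun ℓ => ¬ Even ℓ), (y ((ℓ : ℕ) : ZMod m))⁻¹ := by
      rw [← Finset.sum_neg_distrib]
      refine Finset.sum_congr rfl fun ℓ hℓ => ?_
      simp only [mem_filter] at hℓ
      rw [(Nat.not_even_iff_odd.mp hℓ.2).neg_one_pow, neg_one_mul]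
    rw [hsplit, he, ho] at halt
    have := aux_cast_sum m (fun ℓ => ¬ Even ℓ) (fun z => (y z)⁻¹)
    rw [this] at halt
    rw [hSo]
    linear_combination -halt
  -- parity of val
  have hpar : ∀ w c : ZMod m, (Even ((w + c).val) ↔ (Even (w.val + c.val))) := by
    intro w c
    rw [ZMod.val_add, Nat.even_iff, Nat.even_iff, Nat.mod_mod_of_dvd _ h2]
  -- shift lemma
  have hshift : ∀ c : ZMod m, ∑ z ∈ Se, (y (z - c))⁻¹ = lam := by
    intro c
    have hre : ∑ z ∈ Se, (y (z - c))⁻¹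
        = ∑ w ∈ Finset.univ.filter (fun w : ZMod m => Even ((w + c).val)), (y w)⁻¹ := by
      refine Finset.sum_nbij' (fun z => z - c) (fun w => w + c) ?_ ?_ ?_ ?_ ?_
      · intro z hz
        simp only [hSe, mem_filter, mem_univ, true_and] at hz ⊢
        simpa using hz
      · intro w hw
        simp only [hSe, mem_filter, mem_univ, true_and] at hw ⊢
        exact hw
      · intro z _; ring
      · intro w _; ring
      · intro z _; rfl
    rw [hre]
    by_cases hc : Even c.val
    · have : Finset.univ.filter (fun w : ZMod m => Even ((w + c).val)) = Se := by
        rw [hSe]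
        refine Finset.filter_congr fun w _ => ?_
        rw [hpar, Nat.even_add, iff_true_intro hc]
        tauto
      rw [this, ← hlamE]
    · have : Finset.univ.filter (fun w : ZMod m => Even ((w + c).val)) = So := by
        rw [hSo]
        refine Finset.filter_congr fun w _ => ?_
        rw [hpar, Nat.even_add, iff_false_intro hc]
        tauto
      rw [this, hlamO]
  -- N entries in ZMod form
  have hN' : ∀ i j : Fin (m - 1), N i j = (y (((j:ℕ) : ZMod m) - ((i:ℕ) : ZMod m)))⁻¹ := by
    intro i j
    rw [hN]
    congr 1
    push_cast
    ring
  -- evens of range (m-1) = evens of range m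
  have hrange : (Finset.range (m-1)).filter (fun ℓ => Even ℓ)
      = (Finset.range m).filter (fun ℓ => Even ℓ) := by
    have hm1 : m - 1 + 1 = m := Nat.succ_pred_eq_of_pos hm0
    have hodd : ¬ Even (m - 1) := by
      simp only [Nat.even_iff] at hm ⊢
      omega
    conv_rhs => rw [← hm1, Finset.range_add_one]
    rw [Finset.filter_insert, if_neg hodd]
  -- key row sum
  have key : ∀ i : Fin (m-1), ∑ j : Fin (m-1),
      N i j * (if Even (j:ℕ) then (1:ℂ) else 0) = lam := by
    intro i
    have : ∀ j : Fin (m-1), N i j * (if Even (j:ℕ) then (1:ℂ) else 0)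
        = (if Even (j:ℕ) then (y (((j:ℕ) : ZMod m) - ((i:ℕ) : ZMod m)))⁻¹ else 0) := by
      intro j
      rw [hN' i j, mul_ite, mul_one, mul_zero]
    rw [Finset.sum_congr rfl fun j _ => this j,
      Fin.sum_univ_eq_sum_range (fun ℓ => if Even ℓ then (y ((ℓ:ℕ) - ((i:ℕ):ZMod m)))⁻¹ else 0),
      ← Finset.sum_filter, hrange,
      aux_cast_sum m (fun ℓ => Even ℓ) (fun z => (y (z - ((i:ℕ):ZMod m)))⁻¹)]
    exact hshift _
  -- sum of the indicator vector
  obtain ⟨k, hk⟩ := h2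
  have hsum_v : ∑ i : Fin (m-1), (if Even (i:ℕ) then (1:ℂ) else 0) = (m:ℂ)/2 := by
    rw [Fin.sum_univ_eq_sum_range (fun ℓ => if Even ℓ then (1:ℂ) else 0),
      ← Finset.sum_filter]
    simp only [Finset.sum_const, smul_eq_mul, mul_one]
    rw [hrange]
    subst hk
    rw [aux_card_even k]
    push_cast
    ring
  have hNN : N⁻¹ * N = 1 := Matrix.nonsing_inv_mul N hinv
  have main : lam * (∑ i, ∑ j, N⁻¹ i j) = (m:ℂ)/2 := by
    calc lam * ∑ i, ∑ j, N⁻¹ i j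
        = ∑ i, ∑ t, N⁻¹ i t * lam := by
          rw [Finset.mul_sum]
          exact Finset.sum_congr rfl fun i _ => by
            rw [Finset.mul_sum]
            exact Finset.sum_congr rfl fun t _ => mul_comm _ _
      _ = ∑ i, ∑ t, N⁻¹ i t * (∑ j, N t j * (if Even (j:ℕ) then (1:ℂ) else 0)) := by
          simp_rw [key]
      _ = ∑ i, ∑ j, (∑ t, N⁻¹ i t * N t j) * (if Even (j:ℕ) then (1:ℂ) else 0) := by
          refine Finset.sum_congr rfl fun i _ => ?_
          simp_rw [Finset.mul_sum, Finset.sum_mul, mul_assoc]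
          exact Finset.sum_comm
      _ = ∑ i, ∑ j, (1 : Matrix (Fin (m-1)) (Fin (m-1)) ℂ) i j
            * (if Even (j:ℕ) then (1:ℂ) else 0) := by
          simp_rw [← Matrix.mul_apply, hNN]
      _ = ∑ i : Fin (m-1), (if Even (i:ℕ) then (1:ℂ) else 0) := by
          refine Finset.sum_congr rfl fun i _ => ?_
          simp only [Matrix.one_apply, ite_mul, one_mul, zero_mul]
          rw [Finset.sum_ite_eq]
          simp
      _ = (m:ℂ)/2 := hsum_v
  have hmC : (m:ℂ) ≠ 0 := Nat.cast_ne_zero.mpr hm0.ne'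
  have c1 : ∑ i, ∑ j, N⁻¹ i j = ((m : ℂ) / 2) * lam⁻¹ := by
    rw [← div_eq_mul_inv, eq_div_iff hlam0, mul_comm]
    exact main
  refine ⟨c1, ?_⟩
  have htot : ∑ ℓ ∈ Finset.range m, (y ((ℓ : ℕ) : ZMod m))⁻¹ = 2 * lam := by
    rw [← Finset.sum_filter_add_sum_filter_not (Finset.range m) (fun ℓ => Even ℓ), ← hlam,
      aux_cast_sum m (fun ℓ => ¬ Even ℓ) (fun z => (y z)⁻¹), ← hSo, hlamO]
    ring
  rw [c1, htot, mul_inv, one_div, inv_inv, mul_inv]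
  ring
end

section
/- Let z : ℤ² → ℂ be a discrete holomorphic function and define p, q : ℤ² → ℂ by p_{i,j} = z_{i+j, -i+j} and q_{i,j} = z_{i+j+1, -i+j}. Then p and q are P-nets: for all (i,j), 1/(p_{i+1,j}-p_{i,j}) - 1/(p_{i,j+1}-p_{i,j}) + 1/(p_{i-1,j}-p_{i,j}) - 1/(p_{i,j-1}-p_{i,j}) = 0, and similarly for q (assuming all denominators are nonzero). -/
lemma cr_swap (a b c d : ℂ) : cr a b c d = cr c d a b := by
  unfold cr; ring

lemma cr_rot (a b c d : ℂ) (hbc : b ≠ c) (hda : d ≠ a)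
    (h : cr a b c d = -1) : cr b c d a = -1 := by
  have hbc' : b - c ≠ 0 := sub_ne_zero.mpr hbc
  have hda' : d - a ≠ 0 := sub_ne_zero.mpr hda
  unfold cr at h ⊢
  rw [div_eq_iff (mul_ne_zero hbc' hda')] at h
  have hne : (a - b) * (c - d) ≠ 0 := by
    rw [h]; simp [hbc', hda']
  rw [div_eq_iff (by rw [mul_comm]; exact hne)]
  linear_combination h

/-- harmonic-mean relation at the vertex `a` of a face with cross-ratio `-1`. -/
lemma harm (a b c d : ℂ) (hba : b ≠ a) (hca : c ≠ a) (hda : d ≠ a) (hbc : b ≠ c)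
    (h : cr a b c d = -1) : 2 / (c - a) = 1 / (b - a) + 1 / (d - a) := by
  have hbc' : b - c ≠ 0 := sub_ne_zero.mpr hbc
  have hda' : d - a ≠ 0 := sub_ne_zero.mpr hda
  unfold cr at h
  rw [div_eq_iff (mul_ne_zero hbc' hda')] at h
  have hba' : b - a ≠ 0 := sub_ne_zero.mpr hba
  have hca' : c - a ≠ 0 := sub_ne_zero.mpr hca
  field_simp
  linear_combination h


lemma face_harms (a b c d : ℂ) (hd : List.Pairwise (· ≠ ·) [a, b, c, d])
    (h : cr a b c d = -1) :
    (2 / (c - a) = 1 / (b - a) + 1 / (d - a)) ∧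
    (2 / (d - b) = 1 / (c - b) + 1 / (a - b)) ∧
    (2 / (a - c) = 1 / (d - c) + 1 / (b - c)) ∧
    (2 / (b - d) = 1 / (a - d) + 1 / (c - d)) := by
  simp only [List.pairwise_cons, List.mem_cons] at hd
  obtain ⟨hA, hB, hC, -⟩ := hd
  have hab : a ≠ b := hA b (by simp)
  have hac : a ≠ c := hA c (by simp)
  have had : a ≠ d := hA d (by simp)
  have hbc : b ≠ c := hB c (by simp)
  have hbd : b ≠ d := hB d (by simp)
  have hcd : c ≠ d := hC d (by simp)
  have h2 : cr b c d a = -1 := cr_rot a b c d hbc had.symm h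
  have h3 : cr c d a b = -1 := (cr_swap a b c d) ▸ h
  have h4 : cr d a b c = -1 := (cr_swap b c d a) ▸ h2
  exact ⟨harm a b c d hab.symm hac.symm had.symm hbc h,
         harm b c d a hbc.symm hbd.symm hab hcd h2,
         harm c d a b hcd.symm hac hbc had.symm h3,
         harm d a b c had hbd hcd hab h4⟩

lemma combine' (x1 x2 x3 x4 y1 y2 y3 y4 : ℂ)
    (H1 : 2 * x1 = y1 + y2) (H2 : 2 * x2 = y2 + y3)
    (H3 : 2 * x3 = y3 + y4) (H4 : 2 * x4 = y4 + y1) :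
    x4 - x1 + x2 - x3 = 0 := by
  linear_combination (H4 - H1 + H2 - H3) / 2

lemma combine (P e1 e2 e3 e4 c1 c2 c3 c4 : ℂ)
    (H1 : 2 / (c1 - P) = 1 / (e1 - P) + 1 / (e2 - P))
    (H2 : 2 / (c2 - P) = 1 / (e2 - P) + 1 / (e3 - P))
    (H3 : 2 / (c3 - P) = 1 / (e3 - P) + 1 / (e4 - P))
    (H4 : 2 / (c4 - P) = 1 / (e4 - P) + 1 / (e1 - P)) :
    1 / (c4 - P) - 1 / (c1 - P) + 1 / (c2 - P) - 1 / (c3 - P) = 0 := by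
  refine combine' _ _ _ _ (1 / (e1 - P)) (1 / (e2 - P)) (1 / (e3 - P)) (1 / (e4 - P)) ?_ ?_ ?_ ?_ <;>
    rw [mul_one_div] <;> assumption

lemma pnet_at (z : ℤ × ℤ → ℂ)
    (hdist : ∀ i j : ℤ,
      List.Pairwise (· ≠ ·) [z (i, j), z (i + 1, j), z (i + 1, j + 1), z (i, j + 1)])
    (hz : ∀ i j : ℤ, cr (z (i, j)) (z (i + 1, j)) (z (i + 1, j + 1)) (z (i, j + 1)) = -1)
    (m n : ℤ) :
    1 / (z (m + 1, n - 1) - z (m, n)) - 1 / (z (m + 1, n + 1) - z (m, n))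
      + 1 / (z (m - 1, n + 1) - z (m, n)) - 1 / (z (m - 1, n - 1) - z (m, n)) = 0 := by
  have H1 := (face_harms _ _ _ _ (hdist m n) (hz m n)).1
  have H2 := (face_harms _ _ _ _ (hdist (m - 1) n) (hz (m - 1) n)).2.1
  have H3 := (face_harms _ _ _ _ (hdist (m - 1) (n - 1)) (hz (m - 1) (n - 1))).2.2.1
  have H4 := (face_harms _ _ _ _ (hdist m (n - 1)) (hz m (n - 1))).2.2.2
  rw [show m - 1 + 1 = m from by ring] at H2 H3
  rw [show n - 1 + 1 = n from by ring] at H3 H4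
  exact combine (z (m, n)) (z (m + 1, n)) (z (m, n + 1)) (z (m - 1, n)) (z (m, n - 1))
    (z (m + 1, n + 1)) (z (m - 1, n + 1)) (z (m - 1, n - 1)) (z (m + 1, n - 1))
    H1 H2 H3 H4

/-- The even and odd rotated restrictions `p_{i,j} = z_{i+j,-i+j}` and
`q_{i,j} = z_{i+j+1,-i+j}` of a discrete holomorphic function are P-nets. -/
theorem holomorphic_restrictions_are_pnets (z p q : ℤ × ℤ → ℂ)
    (hdist : ∀ i j : ℤ,
      List.Pairwise (· ≠ ·) [z (i, j), z (i + 1, j), z (i + 1, j + 1), z (i, j + 1)])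
    (hz : ∀ i j : ℤ, cr (z (i, j)) (z (i + 1, j)) (z (i + 1, j + 1)) (z (i, j + 1)) = -1)
    (hp : ∀ i j : ℤ, p (i, j) = z (i + j, -i + j))
    (hq : ∀ i j : ℤ, q (i, j) = z (i + j + 1, -i + j))
    (hpden : ∀ i j : ℤ, p (i + 1, j) ≠ p (i, j) ∧ p (i, j + 1) ≠ p (i, j) ∧
      p (i - 1, j) ≠ p (i, j) ∧ p (i, j - 1) ≠ p (i, j))
    (hqden : ∀ i j : ℤ, q (i + 1, j) ≠ q (i, j) ∧ q (i, j + 1) ≠ q (i, j) ∧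
      q (i - 1, j) ≠ q (i, j) ∧ q (i, j - 1) ≠ q (i, j)) :
    ∀ i j : ℤ,
      (1 / (p (i + 1, j) - p (i, j)) - 1 / (p (i, j + 1) - p (i, j))
        + 1 / (p (i - 1, j) - p (i, j)) - 1 / (p (i, j - 1) - p (i, j)) = 0) ∧
      (1 / (q (i + 1, j) - q (i, j)) - 1 / (q (i, j + 1) - q (i, j))
        + 1 / (q (i - 1, j) - q (i, j)) - 1 / (q (i, j - 1) - q (i, j)) = 0) := by
  intro i j
  constructor
  · have e0 : p (i, j) = z (i + j, -i + j) := hp i j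
    have e1 : p (i + 1, j) = z (i + j + 1, -i + j - 1) := by
      rw [hp, show i + 1 + j = i + j + 1 from by ring, show -(i + 1) + j = -i + j - 1 from by ring]
    have e2 : p (i, j + 1) = z (i + j + 1, -i + j + 1) := by
      rw [hp, show i + (j + 1) = i + j + 1 from by ring, show -i + (j + 1) = -i + j + 1 from by ring]
    have e3 : p (i - 1, j) = z (i + j - 1, -i + j + 1) := by
      rw [hp, show i - 1 + j = i + j - 1 from by ring, show -(i - 1) + j = -i + j + 1 from by ring]
    have e4 : p (i, j - 1) = z (i + j - 1, -i + j - 1) := by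
      rw [hp, show i + (j - 1) = i + j - 1 from by ring, show -i + (j - 1) = -i + j - 1 from by ring]
    rw [e0, e1, e2, e3, e4]
    exact pnet_at z hdist hz (i + j) (-i + j)
  · have e0 : q (i, j) = z (i + j + 1, -i + j) := hq i j
    have e1 : q (i + 1, j) = z (i + j + 1 + 1, -i + j - 1) := by
      rw [hq, show i + 1 + j + 1 = i + j + 1 + 1 from by ring,
        show -(i + 1) + j = -i + j - 1 from by ring]
    have e2 : q (i, j + 1) = z (i + j + 1 + 1, -i + j + 1) := by
      rw [hq, show i + (j + 1) + 1 = i + j + 1 + 1 from by ring,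
        show -i + (j + 1) = -i + j + 1 from by ring]
    have e3 : q (i - 1, j) = z (i + j + 1 - 1, -i + j + 1) := by
      rw [hq, show i - 1 + j + 1 = i + j + 1 - 1 from by ring,
        show -(i - 1) + j = -i + j + 1 from by ring]
    have e4 : q (i, j - 1) = z (i + j + 1 - 1, -i + j - 1) := by
      rw [hq, show i + (j - 1) + 1 = i + j + 1 - 1 from by ring,
        show -i + (j - 1) = -i + j - 1 from by ring]
    rw [e0, e1, e2, e3, e4]
    exact pnet_at z hdist hz (i + j + 1) (-i + j)
end

section
/- Let a, b, c, d ∈ ℂ be four pairwise distinct points lying on a common circle (or line), such that d is the reflection of a across the perpendicular bisector of the segment [b, c], with a and d on the same arc determined by b and c. Then the cross-ratio cr(a,b,d,c) = ((a-b)(d-c))/((b-d)(c-a)) is real and positive, and equals |a-b|²/|b-d|². -/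
/-- Reflection of `w` across the perpendicular bisector of the segment `[u, v]`:
the unique orientation-reversing isometry of `ℂ` exchanging `u` and `v` and
fixing the bisector pointwise. -/
noncomputable def perpBisectorReflect (u v w : ℂ) : ℂ :=
  (u + v) / 2 - ((v - u) / (starRingEnd ℂ) (v - u)) * (starRingEnd ℂ) (w - (u + v) / 2)

open ComplexConjugate

lemma div_conj_mul_conj (z : ℂ) : z / conj z * conj z = z := by
  rcases eq_or_ne z 0 with rfl | hz
  · simp
  · exact div_mul_cancel₀ z ((map_ne_zero conj).mpr hz)

lemma norm_div_conj_self {z : ℂ} (hz : z ≠ 0) : ‖z / conj z‖ = 1 := by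
  rw [norm_div, Complex.norm_conj, div_self (norm_ne_zero_iff.mpr hz)]

lemma perpBisectorReflect_sub_right (u v w : ℂ) :
    perpBisectorReflect u v w - v = -((v - u) / conj (v - u)) * conj (w - u) := by
  have key := div_conj_mul_conj (v - u)
  simp only [perpBisectorReflect, map_sub, map_add, map_div₀, Complex.conj_ofNat] at key ⊢
  linear_combination key / 2

lemma left_sub_perpBisectorReflect (u v w : ℂ) :
    u - perpBisectorReflect u v w = -((v - u) / conj (v - u)) * conj (v - w) := by
  have key := div_conj_mul_conj (v - u)
  simp only [perpBisectorReflect, map_sub, map_add, map_div₀, Complex.conj_ofNat] at key ⊢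
  linear_combination key / 2

lemma norm_left_sub_perpBisectorReflect {u v : ℂ} (huv : u ≠ v) (w : ℂ) :
    ‖u - perpBisectorReflect u v w‖ = ‖v - w‖ := by
  rw [left_sub_perpBisectorReflect, norm_mul, norm_neg,
    norm_div_conj_self (sub_ne_zero.mpr huv.symm), one_mul, Complex.norm_conj]

lemma cr_perpBisectorReflect {b c : ℂ} (hbc : b ≠ c) (a : ℂ) :
    cr a b (perpBisectorReflect b c a) c = (‖a - b‖ ^ 2 / ‖c - a‖ ^ 2 : ℝ) := by
  set k := -((c - b) / conj (c - b))
  have hk : k ≠ 0 := neg_ne_zero.mpr <| div_ne_zero (sub_ne_zero.mpr hbc.symm)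
    ((map_ne_zero conj).mpr (sub_ne_zero.mpr hbc.symm))
  calc cr a b (perpBisectorReflect b c a) c
      = k * ((a - b) * conj (a - b)) / (k * ((c - a) * conj (c - a))) := by
        rw [cr, perpBisectorReflect_sub_right, left_sub_perpBisectorReflect]
        ring
    _ = (‖a - b‖ ^ 2 / ‖c - a‖ ^ 2 : ℝ) := by
        rw [mul_div_mul_left _ _ hk, Complex.mul_conj', Complex.mul_conj']
        norm_cast

theorem reflected_cross_ratio_general (a b c d : ℂ)
    (hab : a ≠ b) (hac : a ≠ c)
    (hbc : b ≠ c)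
    (hd : d = perpBisectorReflect b c a) :
    cr a b d c = (‖a - b‖ ^ 2 / ‖b - d‖ ^ 2 : ℝ) ∧
    (0 : ℝ) < ‖a - b‖ ^ 2 / ‖b - d‖ ^ 2 := by
  have hbd : ‖b - d‖ = ‖c - a‖ := hd ▸ norm_left_sub_perpBisectorReflect hbc a
  rw [hbd, hd]
  have hab' : 0 < ‖a - b‖ := norm_pos_iff.mpr (sub_ne_zero.mpr hab)
  have hca : 0 < ‖c - a‖ := norm_pos_iff.mpr (sub_ne_zero.mpr hac.symm)
  exact ⟨cr_perpBisectorReflect hbc a, by positivity⟩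

/-- If `d` is the reflection of `a` across the perpendicular bisector of `[b,c]`
(so that `a, b, c, d` lie on a common circle or line, `a` and `d` on the same
arc), then the cross-ratio `cr(a,b,d,c)` is real positive and equals
`|a-b|²/|b-d|²`. -/
theorem reflected_cross_ratio (a b c d : ℂ)
    (hab : a ≠ b) (hac : a ≠ c) (had : a ≠ d)
    (hbc : b ≠ c) (hbd : b ≠ d) (hcd : c ≠ d)
    (hd : d = perpBisectorReflect b c a) :
    cr a b d c = (‖a - b‖ ^ 2 / ‖b - d‖ ^ 2 : ℝ) ∧
    (0 : ℝ) < ‖a - b‖ ^ 2 / ‖b - d‖ ^ 2 :=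
  reflected_cross_ratio_general a b c d hab hac hbc hd
end

section
/- Let L = {(i,j,k) ∈ ℤ³ : i+j+k even} be the octahedral lattice. If p : ℤ² → ℂ∪{∞} is a P-net and one sets x(i,j,k) := p_{i,k} for all (i,j,k) ∈ L, then x satisfies the dSKP recurrence: for every point q of ℤ³∖L where all terms are defined, ((x_{-e₃}-x_{e₂})(x_{-e₁}-x_{e₃})(x_{-e₂}-x_{e₁})) / ((x_{e₂}-x_{-e₁})(x_{e₃}-x_{-e₂})(x_{e₁}-x_{-e₃})) = -1, where x_{±eᵢ} denotes the value at q ± eᵢ. -/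
/-- If `p : ℤ² → ℂ` is a P-net (in the multi-ratio form) and `x(i,j,k) := p_{i,k}`
on the octahedral lattice `L = {(i,j,k) : i+j+k even}`, then `x` satisfies the
dSKP recurrence at every point of `ℤ³ ∖ L` where all terms are defined. -/
theorem pnet_gives_dskp_solution (p : ℤ × ℤ → ℂ) (x : ℤ × ℤ × ℤ → ℂ)
    (hp : ∀ i j : ℤ,
      ((p (i, j) - p (i + 1, j)) * (p (i, j + 1) - p (i, j)) * (p (i - 1, j) - p (i, j - 1)))
        / ((p (i + 1, j) - p (i, j + 1)) * (p (i, j) - p (i - 1, j)) * (p (i, j - 1) - p (i, j)))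
        = -1)
    (hx : ∀ i j k : ℤ, (i + j + k) % 2 = 0 → x (i, j, k) = p (i, k)) :
    ∀ i j k : ℤ, (i + j + k) % 2 ≠ 0 →
      x (i, j + 1, k) - x (i - 1, j, k) ≠ 0 →
      x (i, j, k + 1) - x (i, j - 1, k) ≠ 0 →
      x (i + 1, j, k) - x (i, j, k - 1) ≠ 0 →
      ((x (i, j, k - 1) - x (i, j + 1, k)) * (x (i - 1, j, k) - x (i, j, k + 1))
          * (x (i, j - 1, k) - x (i + 1, j, k)))
        / ((x (i, j + 1, k) - x (i - 1, j, k)) * (x (i, j, k + 1) - x (i, j - 1, k))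
          * (x (i + 1, j, k) - x (i, j, k - 1)))
        = -1 := by
  intro i j k hodd h1 h2 h3
  have e1 : x (i, j, k - 1) = p (i, k - 1) := hx i j (k - 1) (by omega)
  have e2 : x (i, j + 1, k) = p (i, k) := hx i (j + 1) k (by omega)
  have e3 : x (i - 1, j, k) = p (i - 1, k) := hx (i - 1) j k (by omega)
  have e4 : x (i, j, k + 1) = p (i, k + 1) := hx i j (k + 1) (by omega)
  have e5 : x (i, j - 1, k) = p (i, k) := hx i (j - 1) k (by omega)
  have e6 : x (i + 1, j, k) = p (i + 1, k) := hx (i + 1) j k (by omega)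
  simp only [e1, e2, e3, e4, e5, e6] at h1 h2 h3 ⊢
  have H := hp i k
  have hD : (p (i + 1, k) - p (i, k + 1)) * (p (i, k) - p (i - 1, k))
      * (p (i, k - 1) - p (i, k)) ≠ 0 := by
    intro h0
    rw [h0, div_zero] at H
    exact one_ne_zero (neg_eq_zero.mp H.symm)
  have HN : (p (i, k) - p (i + 1, k)) * (p (i, k + 1) - p (i, k)) * (p (i - 1, k) - p (i, k - 1))
      = -((p (i + 1, k) - p (i, k + 1)) * (p (i, k) - p (i - 1, k))
        * (p (i, k - 1) - p (i, k))) := by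
    rw [div_eq_iff hD] at H
    linear_combination H
  rw [div_eq_iff (mul_ne_zero (mul_ne_zero h1 h2) h3)]
  linear_combination HN
end

section
/- In an orthogonal square-grid circle pattern, both the intersection points p : ℤ² → ℂ and the circle centers t : ℤ² → ℂ are P-nets: 1/(p_{i+1,j}-p_{i,j}) - 1/(p_{i,j+1}-p_{i,j}) + 1/(p_{i-1,j}-p_{i,j}) - 1/(p_{i,j-1}-p_{i,j}) = 0 for all (i,j), and similarly for t. (It suffices to prove the following local statement: if c is a circle with center t₀ through four pairwise distinct points p₁, p₂, p₃, p₄, and four circles centered t₁, t₂, t₃, t₄ each orthogonal to c pass through consecutive pairs (p₁,p₂), (p₂,p₃), (p₃,p₄), (p₄,p₁), then ∑_k (−1)^k/(p_k − t₀) = 0 under the concyclicity and orthogonality constraints expressed algebraically.) -/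
/-!
Two orthogonal circles with centers `a`, `b` meeting in `x ≠ y` form a harmonic quadruple: the
cross-ratio `(a, b; x, y)` is `-1`. For a harmonic quadruple, `1 / (y - x)` is the mean of
`1 / (a - x)` and `1 / (b - x)`, and since harmonicity is symmetric under exchanging the two
pairs, `1 / (b - a)` is the mean of `1 / (x - a)` and `1 / (y - a)`. At a vertex of the pattern
each of the four terms of the P-net sum is therefore a mean of two terms attached to the
neighbouring centers (resp. points), and the alternating sum telescopes to zero.
-/

open ComplexConjugate

/-- The cross-ratio `(a, b; x, y)` equals `-1`, cleared of denominators. -/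
structure IsHarmonic (a b x y : ℂ) : Prop where
  left_ne : a ≠ b
  right_ne : x ≠ y
  eq : (x - a) * (y - b) + (x - b) * (y - a) = 0

namespace IsHarmonic

variable {a b x y : ℂ}

theorem symm (h : IsHarmonic a b x y) : IsHarmonic x y a b :=
  ⟨h.right_ne, h.left_ne, by linear_combination h.eq⟩

theorem swap_left (h : IsHarmonic a b x y) : IsHarmonic b a x y :=
  ⟨h.left_ne.symm, h.right_ne, by linear_combination h.eq⟩

theorem swap_right (h : IsHarmonic a b x y) : IsHarmonic a b y x :=
  ⟨h.left_ne, h.right_ne.symm, by linear_combination h.eq⟩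

theorem one_div_sub (h : IsHarmonic a b x y) :
    1 / (y - x) = (1 / (a - x) + 1 / (b - x)) / 2 := by
  have hx : ∀ {c d : ℂ}, IsHarmonic c d x y → c - x ≠ 0 := fun {c d} h hc => by
    have : (x - d) * (y - x) = 0 := by linear_combination h.eq + (y - d + x - d) * hc
    rcases mul_eq_zero.1 this with h' | h'
    · exact h.left_ne (by linear_combination hc + h')
    · exact h.right_ne (by linear_combination -h')
  have hax := hx h
  have hbx := hx h.swap_left
  have hyx : y - x ≠ 0 := sub_ne_zero.2 h.right_ne.symm
  field_simp
  linear_combination h.eq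

end IsHarmonic

theorem isHarmonic_of_orthogonal_circles {a b x y : ℂ} {ρ σ : ℝ} (hxy : x ≠ y)
    (hxa : ‖x - a‖ = ρ) (hya : ‖y - a‖ = ρ) (hxb : ‖x - b‖ = σ) (hyb : ‖y - b‖ = σ)
    (horth : ‖b - a‖ ^ 2 = ρ ^ 2 + σ ^ 2) : IsHarmonic a b x y := by
  have hab : a ≠ b := by
    rintro rfl
    rw [sub_self, norm_zero] at horth
    have hρ : ρ = 0 := pow_eq_zero_iff two_ne_zero |>.1 (by nlinarith [sq_nonneg ρ, sq_nonneg σ])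
    rw [hρ, norm_eq_zero, sub_eq_zero] at hxa hya
    exact hxy (hxa.trans hya.symm)
  have conj_eq (z : ℂ) {c : ℝ} (hz : ‖z‖ = c) : z * conj z = (c : ℂ) ^ 2 := by
    rw [Complex.mul_conj, Complex.normSq_eq_norm_sq, hz, Complex.ofReal_pow]
  have h1 := conj_eq _ hxa
  have h2 := conj_eq _ hya
  have h3 := conj_eq _ hxb
  have h4 := conj_eq _ hyb
  have h5 : (b - a) * conj (b - a) = (ρ : ℂ) ^ 2 + (σ : ℂ) ^ 2 := by
    rw [Complex.mul_conj, Complex.normSq_eq_norm_sq, horth]; push_cast; ring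
  simp only [map_sub] at h1 h2 h3 h4 h5
  -- eliminate `conj y` between the circle equations through `y`, then use orthogonality
  have key : (y - x) * (conj a - conj b) * ((x - a) * (y - b) + (x - b) * (y - a)) = 0 := by
    linear_combination -(a + b - 2 * x) * ((y - a) * (h1 - h2 - h3 + h4) - (a - b) * (h2 - h1)
      - (y - x) * (h1 + h3 - h5)) - 2 * (b - x) * (y - x) * (h1 + h3 - h5)
  refine ⟨hab, hxy, ?_⟩
  rcases mul_eq_zero.1 key with h | h
  · rcases mul_eq_zero.1 h with h | h
    · exact absurd (sub_eq_zero.1 h).symm hxy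
    · exact absurd (star_injective (sub_eq_zero.1 h)) hab
  · exact h

theorem orthogonal_circle_pattern_pnets_general (p t : ℤ × ℤ → ℂ) (r : ℤ × ℤ → ℝ)
    (hcirc : ∀ i j : ℤ,
      ‖p (i, j) - t (i, j)‖ = r (i, j) ∧
      ‖p (i + 1, j) - t (i, j)‖ = r (i, j) ∧
      ‖p (i + 1, j + 1) - t (i, j)‖ = r (i, j) ∧
      ‖p (i, j + 1) - t (i, j)‖ = r (i, j))
    (horthH : ∀ i j : ℤ,
      (‖t (i + 1, j) - t (i, j)‖) ^ 2 = r (i, j) ^ 2 + r (i + 1, j) ^ 2)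
    (horthV : ∀ i j : ℤ,
      (‖t (i, j + 1) - t (i, j)‖) ^ 2 = r (i, j) ^ 2 + r (i, j + 1) ^ 2)
    (hpden : ∀ i j : ℤ, p (i + 1, j) ≠ p (i, j) ∧ p (i, j + 1) ≠ p (i, j) ∧
      p (i - 1, j) ≠ p (i, j) ∧ p (i, j - 1) ≠ p (i, j)) :
    ∀ i j : ℤ,
      (1 / (p (i + 1, j) - p (i, j)) - 1 / (p (i, j + 1) - p (i, j))
        + 1 / (p (i - 1, j) - p (i, j)) - 1 / (p (i, j - 1) - p (i, j)) = 0) ∧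
      (1 / (t (i + 1, j) - t (i, j)) - 1 / (t (i, j + 1) - t (i, j))
        + 1 / (t (i - 1, j) - t (i, j)) - 1 / (t (i, j - 1) - t (i, j)) = 0) := by
  have H : ∀ i j, IsHarmonic (t (i, j)) (t (i + 1, j)) (p (i + 1, j)) (p (i + 1, j + 1)) :=
    fun i j => isHarmonic_of_orthogonal_circles (hpden (i + 1) j).2.1.symm (hcirc i j).2.1
      (hcirc i j).2.2.1 (hcirc (i + 1) j).1 (hcirc (i + 1) j).2.2.2 (horthH i j)
  have V : ∀ i j, IsHarmonic (t (i, j)) (t (i, j + 1)) (p (i, j + 1)) (p (i + 1, j + 1)) :=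
    fun i j => isHarmonic_of_orthogonal_circles (hpden i (j + 1)).1.symm (hcirc i j).2.2.2
      (hcirc i j).2.2.1 (hcirc i (j + 1)).1 (hcirc i (j + 1)).2.1 (horthV i j)
  intro i j
  obtain ⟨i, rfl⟩ : ∃ k, i = k + 1 := ⟨i - 1, by ring⟩
  obtain ⟨j, rfl⟩ : ∃ l, j = l + 1 := ⟨j - 1, by ring⟩
  simp only [add_sub_cancel_right]
  constructor
  · linear_combination (V (i + 1) j).one_div_sub - (H i (j + 1)).one_div_sub
      + (V i j).swap_right.one_div_sub - (H i j).swap_right.one_div_sub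
  · linear_combination (H (i + 1) (j + 1)).symm.one_div_sub - (V (i + 1) (j + 1)).symm.one_div_sub
      + (H i (j + 1)).swap_left.symm.one_div_sub - (V (i + 1) j).swap_left.symm.one_div_sub

/-- In an orthogonal square-grid circle pattern (each quad
`p_{i,j}, p_{i+1,j}, p_{i+1,j+1}, p_{i,j+1}` lies on the circle of center
`t_{i,j}` and radius `r_{i,j}`, and adjacent circles intersect orthogonally:
`|t−t'|² = r² + r'²`), both the intersection points `p` and the circle centers
`t` are P-nets. -/
theorem orthogonal_circle_pattern_pnets (p t : ℤ × ℤ → ℂ) (r : ℤ × ℤ → ℝ)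
    (hr : ∀ i j : ℤ, 0 < r (i, j))
    (hcirc : ∀ i j : ℤ,
      ‖p (i, j) - t (i, j)‖ = r (i, j) ∧
      ‖p (i + 1, j) - t (i, j)‖ = r (i, j) ∧
      ‖p (i + 1, j + 1) - t (i, j)‖ = r (i, j) ∧
      ‖p (i, j + 1) - t (i, j)‖ = r (i, j))
    (horthH : ∀ i j : ℤ,
      (‖t (i + 1, j) - t (i, j)‖) ^ 2 = r (i, j) ^ 2 + r (i + 1, j) ^ 2)
    (horthV : ∀ i j : ℤ,
      (‖t (i, j + 1) - t (i, j)‖) ^ 2 = r (i, j) ^ 2 + r (i, j + 1) ^ 2)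
    (hpden : ∀ i j : ℤ, p (i + 1, j) ≠ p (i, j) ∧ p (i, j + 1) ≠ p (i, j) ∧
      p (i - 1, j) ≠ p (i, j) ∧ p (i, j - 1) ≠ p (i, j))
    (htden : ∀ i j : ℤ, t (i + 1, j) ≠ t (i, j) ∧ t (i, j + 1) ≠ t (i, j) ∧
      t (i - 1, j) ≠ t (i, j) ∧ t (i, j - 1) ≠ t (i, j)) :
    ∀ i j : ℤ,
      (1 / (p (i + 1, j) - p (i, j)) - 1 / (p (i, j + 1) - p (i, j))
        + 1 / (p (i - 1, j) - p (i, j)) - 1 / (p (i, j - 1) - p (i, j)) = 0) ∧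
      (1 / (t (i + 1, j) - t (i, j)) - 1 / (t (i, j + 1) - t (i, j))
        + 1 / (t (i - 1, j) - t (i, j)) - 1 / (t (i, j - 1) - t (i, j)) = 0) :=
  orthogonal_circle_pattern_pnets_general p t r hcirc horthH horthV hpden
end
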